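/- arXiv:2211.14482 — 2 statements merged into one kernel-verified Lean document; each statement's English description precedes it below -/
import Mathlib

section
/- In any partition of the L × L grid of cells into exactly two edge-connected regions (grey and white), at least one of the two regions is simply connected, i.e., its complement within the grid together with the exterior is connected (equivalently, at least one region has no holes). -/
open Filter Topology

/-- Nearest-neighbour adjacency on the square lattice `ℤ × ℤ`. -/
def latticeGraph : SimpleGraph (ℤ × ℤ) where
  Adj a b := (a.1 = b.1 ∧ (a.2 = b.2 + 1 ∨ b.2 = a.2 + 1)) ∨
             (a.2 = b.2 ∧ (a.1 = b.1 + 1 ∨ b.1 = a.1 + 1))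
  symm := by
    constructor
    intro a b h
    rcases h with ⟨h1, h2⟩ | ⟨h1, h2⟩
    · exact Or.inl ⟨h1.symm, h2.symm⟩
    · exact Or.inr ⟨h1.symm, h2.symm⟩
  loopless := by
    constructor
    intro a h
    rcases h with ⟨-, h | h⟩ | ⟨-, h | h⟩ <;> omega

/-- The cells of an `L × L` grid, identified with their lower-left corners. -/
def cellBox (L : ℕ) : Set (ℤ × ℤ) := {p | 0 ≤ p.1 ∧ p.1 < L ∧ 0 ≤ p.2 ∧ p.2 < L}

/-- A set of cells is connected under edge-adjacency. -/
def regionConnected (A : Set (ℤ × ℤ)) : Prop := (latticeGraph.induce A).Connected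

/-- Reachability by a path of adjacent cells staying inside the set `S`. -/
def reachIn (S : Set (ℤ × ℤ)) : ℤ × ℤ → ℤ × ℤ → Prop :=
  Relation.ReflTransGen (fun a b => latticeGraph.Adj a b ∧ a ∈ S ∧ b ∈ S)

/-- A cell of the `L × L` grid lying on the boundary of the square. -/
def touchesBoundary (L : ℕ) (p : ℤ × ℤ) : Prop :=
  p.1 = 0 ∨ p.1 = (L : ℤ) - 1 ∨ p.2 = 0 ∨ p.2 = (L : ℤ) - 1

/-- A region `R` in the `L × L` grid has a hole if the complement of `R` within the grid
has a connected component that does not touch the boundary of the square. -/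
def hasHole (L : ℕ) (R : Set (ℤ × ℤ)) : Prop :=
  ∃ c ∈ cellBox L \ R, ∀ c' ∈ cellBox L \ R,
    reachIn (cellBox L \ R) c c' → ¬ touchesBoundary L c'

/-!
The grid minus one region is the other region, which is connected. So if `A` has a hole, that
hole is all of `B`, and `B` stays off the boundary of the square; likewise for `B`. Both cannot
happen, since the corner cell `(0, 0)` belongs to `A` or to `B`.
-/

lemma reachIn_of_regionConnected {S : Set (ℤ × ℤ)} (hS : regionConnected S)
    {c c' : ℤ × ℤ} (hc : c ∈ S) (hc' : c' ∈ S) : reachIn S c c' := by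
  suffices ∀ u v : S, (latticeGraph.induce S).Walk u v → reachIn S u v from
    this ⟨c, hc⟩ ⟨c', hc'⟩ (hS.preconnected _ _).some
  intro u v w
  induction w with
  | nil => exact .refl
  | @cons u v _ hadj _ ih => exact .head ⟨hadj, u.2, v.2⟩ ih

lemma not_touchesBoundary_of_hasHole {L : ℕ} {R : Set (ℤ × ℤ)} (hR : hasHole L R)
    (hconn : regionConnected (cellBox L \ R)) {p : ℤ × ℤ} (hp : p ∈ cellBox L \ R) :
    ¬ touchesBoundary L p := by
  obtain ⟨c, hc, hhole⟩ := hR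
  exact hhole p hp (reachIn_of_regionConnected hconn hc hp)

lemma zero_mem_cellBox {L : ℕ} {p : ℤ × ℤ} (hp : p ∈ cellBox L) : (0, 0) ∈ cellBox L :=
  ⟨le_rfl, hp.1.trans_lt hp.2.1, le_rfl, hp.2.2.1.trans_lt hp.2.2.2⟩

theorem one_region_simply_connected_general (L : ℕ) (A B : Set (ℤ × ℤ))
    (hAc : regionConnected A) (hBc : regionConnected B)
    (hdisj : Disjoint A B) (hcover : A ∪ B = cellBox L) :
    ¬ hasHole L A ∨ ¬ hasHole L B := by
  have hBA : cellBox L \ A = B := hcover ▸ hdisj.sup_sdiff_cancel_left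
  have hAB : cellBox L \ B = A := hcover ▸ hdisj.sup_sdiff_cancel_right
  by_contra! ⟨hholeA, hholeB⟩
  have hcorner : ((0, 0) : ℤ × ℤ) ∈ cellBox L := by
    obtain ⟨c, hc, -⟩ := hholeA
    exact zero_mem_cellBox hc.1
  have hcornerBoundary : touchesBoundary L (0, 0) := Or.inl rfl
  by_cases h0A : ((0, 0) : ℤ × ℤ) ∈ A
  · exact not_touchesBoundary_of_hasHole hholeB (hAB ▸ hAc)
      ⟨hcorner, hdisj.notMem_of_mem_left h0A⟩ hcornerBoundary
  · exact not_touchesBoundary_of_hasHole hholeA (hBA ▸ hBc) ⟨hcorner, h0A⟩ hcornerBoundary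

/-- In any partition of the `L × L` grid of cells into exactly two
connected regions, at least one of the two regions has no holes (is simply connected). -/
theorem one_region_simply_connected (L : ℕ) (A B : Set (ℤ × ℤ))
    (hA : A.Nonempty) (hB : B.Nonempty)
    (hAc : regionConnected A) (hBc : regionConnected B)
    (hdisj : Disjoint A B) (hcover : A ∪ B = cellBox L) :
    ¬ hasHole L A ∨ ¬ hasHole L B :=
  one_region_simply_connected_general L A B hAc hBc hdisj hcover
end

section
/- For every L ≥ 1, P_{L+1}(1) ≥ C_L(1), where C_L(1) is the number of self-avoiding walks from (0,0) to (L,L) in the L × L grid graph and P_L(1) is the number of self-avoiding polygons crossing the L × L square (simple cycles in the (L+1) × (L+1) vertex grid that visit both a vertex with x-coordinate 0 and a vertex with x-coordinate L). -/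
open Filter Topology

/-- The vertices `{0,…,L} × {0,…,L}` of the `L × L` grid graph. -/
def vtxBox (L : ℕ) : Set (ℤ × ℤ) := {p | 0 ≤ p.1 ∧ p.1 ≤ L ∧ 0 ≤ p.2 ∧ p.2 ≤ L}

/-- The `L × L` grid graph on vertex set `{0,…,L}²`, with unit-distance edges. -/
def boxGraph (L : ℕ) : SimpleGraph (ℤ × ℤ) where
  Adj a b := latticeGraph.Adj a b ∧ a ∈ vtxBox L ∧ b ∈ vtxBox L
  symm := by
    constructor
    rintro a b ⟨h1, h2, h3⟩
    exact ⟨latticeGraph.adj_symm h1, h3, h2⟩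
  loopless := by
    constructor
    rintro a ⟨h, -, -⟩
    exact latticeGraph.loopless.irrefl a h

/-- Number of self-avoiding walks crossing the `L × L` square, from `(0,0)` to `(L,L)`. -/
noncomputable def numCrossingWalks (L : ℕ) : ℕ :=
  Nat.card {w : (boxGraph L).Walk (0, 0) ((L : ℤ), (L : ℤ)) // w.IsPath}

/-- Number of self-avoiding polygons crossing the `L × L` square: simple cycles visiting
both a vertex with `x = 0` and a vertex with `x = L`, counted as edge sets. -/
noncomputable def numCrossingPolygons (L : ℕ) : ℕ :=
  Nat.card {s : Set (Sym2 (ℤ × ℤ)) //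
    ∃ (v : ℤ × ℤ) (w : (boxGraph L).Walk v v), w.IsCycle ∧ {e | e ∈ w.edges} = s ∧
      (∃ a ∈ w.support, a.1 = 0) ∧ (∃ b ∈ w.support, b.1 = (L : ℤ))}


/-!
Shifted up by one unit, a self-avoiding walk from `(0,0)` to `(L,L)` runs from `(0,1)` to
`(L,L+1)` inside `{x ≤ L, y ≥ 1}`. Close it up with the edges `(0,0)–(0,1)`,
`(L,L+1)–(L+1,L+1)` and a fixed path from `(L+1,L+1)` to `(0,0)` along the sides `x = L+1` and
`y = 0`, which that region avoids. This gives a polygon in the `(L+1)`-box meeting `x = 0` and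
`x = L+1`, whose edges off those two sides are exactly the edges of the shifted walk. A path is
determined by its edge set, so the walk can be recovered from the polygon.
-/

open SimpleGraph

namespace SimpleGraph.Walk

variable {V : Type*} {G : SimpleGraph V}

theorem IsPath.eq_of_edgeSet_eq {u v : V} {p q : G.Walk u v} (hp : p.IsPath) (hq : q.IsPath)
    (h : p.edgeSet = q.edgeSet) : p = q := by
  induction p with
  | nil => cases q with
    | nil => rfl
    | cons => simp at hq
  | @cons u w v huw p ih =>
    cases q with
    | nil => simp at hp
    | @cons _ w' _ huw' q =>
      rw [cons_isPath_iff] at hp hq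
      have hp' : s(u, w) ∉ p.edgeSet := fun he => hp.2 (p.fst_mem_support_of_mem_edges he)
      have hq' : s(u, w') ∉ q.edgeSet := fun he => hq.2 (q.fst_mem_support_of_mem_edges he)
      rw [edgeSet_cons, edgeSet_cons] at h
      obtain rfl : w = w' := by
        have : s(u, w) ∈ insert s(u, w') q.edgeSet := h ▸ Set.mem_insert _ _
        rcases this with he | he
        · exact Sym2.congr_right.mp he
        · exact absurd (q.fst_mem_support_of_mem_edges he) hq.2
      have htail : p.edgeSet = q.edgeSet := by
        rw [← Set.insert_sdiff_self_of_notMem hp', h, Set.insert_sdiff_self_of_notMem hq']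
      rw [ih hp.1 hq.1 htail]

theorem exists_walk_of_adj_succ (f : ℕ → V) :
    ∀ n, (∀ i < n, G.Adj (f (i + 1)) (f i)) →
      ∃ p : G.Walk (f n) (f 0), ∀ x ∈ p.support, ∃ i ≤ n, f i = x
  | 0, _ => ⟨nil, by simp⟩
  | n + 1, hf => by
    obtain ⟨p, hp⟩ := exists_walk_of_adj_succ f n fun i hi => hf i (by omega)
    refine ⟨cons (hf n n.lt_succ_self) p, fun x hx => ?_⟩
    rcases List.mem_cons.mp hx with rfl | hx
    · exact ⟨n + 1, le_rfl, rfl⟩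
    · obtain ⟨i, hi, rfl⟩ := hp x hx
      exact ⟨i, by omega, rfl⟩

end SimpleGraph.Walk

lemma origin_mem_vtxBox (K : ℕ) : ((0 : ℤ), (0 : ℤ)) ∈ vtxBox K :=
  ⟨le_rfl, by positivity, le_rfl, by positivity⟩

lemma boxGraph_edgeSet_finite (K : ℕ) : (boxGraph K).edgeSet.Finite := by
  refine (Finset.Icc ((0 : ℤ), (0 : ℤ)) (K, K)).sym2.finite_toSet.subset fun e he => ?_
  rw [Finset.mem_coe, Finset.mem_sym2_iff]
  intro x hx
  obtain ⟨h₁, h₂, h₃, h₄⟩ : x ∈ vtxBox K := by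
    induction e using Sym2.ind
    rcases Sym2.mem_iff.mp hx with rfl | rfl
    exacts [he.2.1, he.2.2]
  exact Finset.mem_Icc.mpr ⟨⟨h₁, h₃⟩, ⟨h₂, h₄⟩⟩

lemma mem_vtxBox_of_mem_support {K : ℕ} {u v : ℤ × ℤ} (p : (boxGraph K).Walk u v)
    (hu : u ∈ vtxBox K) {x : ℤ × ℤ} (hx : x ∈ p.support) : x ∈ vtxBox K := by
  induction p with
  | nil => exact List.mem_singleton.mp hx ▸ hu
  | cons h p ih =>
    rcases List.mem_cons.mp hx with rfl | hx
    · exact hu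
    · exact ih h.2.2 hx

def shiftUp (L : ℕ) : boxGraph L →g boxGraph (L + 1) where
  toFun p := (p.1, p.2 + 1)
  map_rel' := by
    rintro a b ⟨hab, ha, hb⟩
    simp only [boxGraph, latticeGraph, vtxBox, Set.mem_ofPred_eq] at *
    push_cast
    omega

@[simp]
lemma shiftUp_apply (L : ℕ) (p : ℤ × ℤ) : shiftUp L p = (p.1, p.2 + 1) := rfl

lemma shiftUp_injective (L : ℕ) : Function.Injective (shiftUp L) := by
  intro a b h
  simp only [shiftUp_apply, Prod.mk.injEq, add_left_inj] at h
  exact Prod.ext h.1 h.2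

lemma adj_origin_shiftUp (L : ℕ) : (boxGraph (L + 1)).Adj (0, 0) (shiftUp L (0, 0)) :=
  ⟨Or.inl ⟨rfl, Or.inr rfl⟩, origin_mem_vtxBox _,
    by simp only [vtxBox, shiftUp_apply, Set.mem_ofPred_eq]; omega⟩

lemma adj_shiftUp_corner (L : ℕ) :
    (boxGraph (L + 1)).Adj (shiftUp L (L, L)) ((L : ℤ) + 1, (L : ℤ) + 1) :=
  ⟨Or.inr ⟨rfl, Or.inr rfl⟩, by simp only [vtxBox, shiftUp_apply, Set.mem_ofPred_eq]; omega,
    by simp only [vtxBox, Set.mem_ofPred_eq]; omega⟩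

def rim (L : ℕ) : Set (ℤ × ℤ) := {x | x.1 = L + 1 ∨ x.2 = 0}

lemma notMem_rim_of_mem_support_map_shiftUp {L : ℕ} {u v : ℤ × ℤ} (w : (boxGraph L).Walk u v)
    (hu : u ∈ vtxBox L) {x : ℤ × ℤ} (hx : x ∈ (w.map (shiftUp L)).support) : x ∉ rim L := by
  rw [Walk.support_map, List.mem_map] at hx
  obtain ⟨y, hy, rfl⟩ := hx
  have := mem_vtxBox_of_mem_support w hu hy
  simp only [vtxBox, rim, shiftUp_apply, Set.mem_ofPred_eq] at this ⊢
  omega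

lemma exists_isPath_rim (L : ℕ) :
    ∃ P : (boxGraph (L + 1)).Walk ((L : ℤ) + 1, (L : ℤ) + 1) (0, 0),
      P.IsPath ∧ ∀ x ∈ P.support, x ∈ rim L := by
  let f : ℕ → ℤ × ℤ := fun i => (min (i : ℤ) (L + 1), max ((i : ℤ) - (L + 1)) 0)
  have hf : ∀ i < 2 * (L + 1), (boxGraph (L + 1)).Adj (f (i + 1)) (f i) := by
    intro i hi
    simp only [f, boxGraph, latticeGraph, vtxBox, Set.mem_ofPred_eq]
    omega
  have h_start : f 0 = (0, 0) := by ext <;> simp only [f] <;> omega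
  have h_end : f (2 * (L + 1)) = ((L : ℤ) + 1, (L : ℤ) + 1) := by
    ext <;> simp only [f] <;> omega
  obtain ⟨p, hp⟩ := Walk.exists_walk_of_adj_succ f (2 * (L + 1)) hf
  refine ⟨p.bypass.copy h_end h_start, (Walk.isPath_copy _ _ _).mpr p.bypass_isPath,
    fun x hx => ?_⟩
  rw [Walk.support_copy] at hx
  obtain ⟨i, -, rfl⟩ := hp x (p.support_bypass_subset_support hx)
  simp only [f, rim, Set.mem_ofPred_eq]
  omega

section closeUp

variable {L : ℕ}

def closeUp (P : (boxGraph (L + 1)).Walk ((L : ℤ) + 1, (L : ℤ) + 1) (0, 0))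
    (w : (boxGraph L).Walk (0, 0) (L, L)) : (boxGraph (L + 1)).Walk (0, 0) (0, 0) :=
  (Walk.cons (adj_origin_shiftUp L) (w.map (shiftUp L))).append
    (Walk.cons (adj_shiftUp_corner L) P)

variable {P : (boxGraph (L + 1)).Walk ((L : ℤ) + 1, (L : ℤ) + 1) (0, 0)}

lemma closeUp_isCycle (hPpath : P.IsPath) (hPrim : ∀ x ∈ P.support, x ∈ rim L)
    {w : (boxGraph L).Walk (0, 0) (L, L)} (hw : w.IsPath) : (closeUp P w).IsCycle := by
  have h_origin : (0, 0) ∉ (w.map (shiftUp L)).support := fun h =>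
    notMem_rim_of_mem_support_map_shiftUp w (origin_mem_vtxBox L) h (by simp [rim])
  have h_corner : shiftUp L (L, L) ∉ P.support := fun h => by
    have := hPrim _ h
    simp only [rim, shiftUp_apply, Set.mem_ofPred_eq] at this
    omega
  have h_length : 0 < P.length :=
    Walk.not_nil_iff_lt_length.mp (Walk.not_nil_of_ne (by simp only [ne_eq, Prod.mk.injEq]; omega))
  refine Walk.IsPath.isCycle_append
    ((Walk.cons_isPath_iff _ _).mpr ⟨hw.map (shiftUp_injective L), h_origin⟩)
    ((Walk.cons_isPath_iff _ _).mpr ⟨hPpath, h_corner⟩) ?_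
    (Or.inr (by rw [Walk.length_cons]; omega))
  rw [Walk.support_cons, Walk.support_cons, List.tail_cons, List.tail_cons, List.disjoint_left]
  exact fun x hx hx' =>
    notMem_rim_of_mem_support_map_shiftUp w (origin_mem_vtxBox L) hx (hPrim x hx')

lemma closeUp_edgeSet_inter (hPrim : ∀ x ∈ P.support, x ∈ rim L)
    (w : (boxGraph L).Walk (0, 0) (L, L)) :
    (closeUp P w).edgeSet ∩ {e | ∀ x ∈ e, x ∉ rim L} = (w.map (shiftUp L)).edgeSet := by
  ext e
  simp only [closeUp, Walk.edgeSet_append, Walk.edgeSet_cons, Set.mem_inter_iff, Set.mem_union,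
    Set.mem_insert_iff, Set.mem_ofPred_eq]
  constructor
  · rintro ⟨(rfl | he) | (rfl | he), hQ⟩
    · exact absurd (by simp [rim]) (hQ (0, 0) (Sym2.mem_mk_left _ _))
    · exact he
    · exact absurd (by simp [rim]) (hQ _ (Sym2.mem_mk_right _ _))
    · exact absurd (hPrim _ (P.mem_support_of_mem_edges he e.out_fst_mem)) (hQ _ e.out_fst_mem)
  · exact fun he => ⟨Or.inl (Or.inr he), fun x hx => notMem_rim_of_mem_support_map_shiftUp w
      (origin_mem_vtxBox L) (Walk.mem_support_of_mem_edges he hx)⟩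

lemma closeUp_injective (hPrim : ∀ x ∈ P.support, x ∈ rim L)
    {w₁ w₂ : (boxGraph L).Walk (0, 0) (L, L)} (hw₁ : w₁.IsPath) (hw₂ : w₂.IsPath)
    (h : (closeUp P w₁).edgeSet = (closeUp P w₂).edgeSet) : w₁ = w₂ := by
  have hmap := closeUp_edgeSet_inter hPrim w₁
  rw [h, closeUp_edgeSet_inter hPrim w₂] at hmap
  exact Walk.map_injective_of_injective (shiftUp_injective L) _ _
    ((hw₂.map (shiftUp_injective L)).eq_of_edgeSet_eq (hw₁.map (shiftUp_injective L)) hmap).symm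

end closeUp

theorem crossing_walks_le_crossing_polygons_general (L : ℕ) :
    numCrossingWalks L ≤ numCrossingPolygons (L + 1) := by
  obtain ⟨P, hPpath, hPrim⟩ := exists_isPath_rim L
  refine @Nat.card_le_card_of_injective _ _ ?_ (fun w => ⟨(closeUp P w.1).edgeSet, (0, 0),
    closeUp P w.1, closeUp_isCycle hPpath hPrim w.2, rfl, ⟨(0, 0), Walk.start_mem_support _, rfl⟩,
    ⟨((L : ℤ) + 1, (L : ℤ) + 1), (Walk.mem_support_append_iff _ _).mpr
      (Or.inr (List.mem_cons_of_mem _ P.start_mem_support)), by push_cast; rfl⟩⟩) ?_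
  · refine Set.Finite.to_subtype ((boxGraph_edgeSet_finite (L + 1)).finite_subsets.subset ?_)
    rintro _ ⟨v, c, -, rfl, -⟩ e he
    exact c.edges_subset_edgeSet he
  · rintro ⟨w₁, hw₁⟩ ⟨w₂, hw₂⟩ h
    exact Subtype.ext (closeUp_injective hPrim hw₁ hw₂ (congrArg Subtype.val h))

/-- For every `L ≥ 1`, `P_{L+1}(1) ≥ C_L(1)`: the number of self-avoiding
walks from `(0,0)` to `(L,L)` in the `L × L` grid is at most the number of self-avoiding
polygons crossing the `(L+1) × (L+1)` square. -/
theorem crossing_walks_le_crossing_polygons (L : ℕ) (hL : 1 ≤ L) :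
    numCrossingWalks L ≤ numCrossingPolygons (L + 1) :=
  crossing_walks_le_crossing_polygons_general L
end
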